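/- arXiv:2410.13315 — 2 statements merged into one kernel-verified Lean document; each statement's English description precedes it below -/
import Mathlib

section
/- Under the hypotheses of the previous estimate with ε = μ₀/8 and λ ∈ (0, C_F/C_G], if (uₙ) ⊂ X satisfies ∥uₙ⁻∥ → ∞ and (∥uₙ⁺∥) is bounded, then 𝒥(uₙ) → −∞, where 𝒥(u) = ½∥u⁺∥² − ½∥u⁻∥² − ∫(F(u) − λG(u))dx. More precisely, 𝒥(uₙ) ≤ ¾∥uₙ⁺∥² − ¼∥uₙ⁻∥². -/
/-! Since `λ ≤ C_F / C_G ≤ 1`, the `|t| ^ q` terms cancel and `F(t) - λ G(t) ≥ -(μ₀/4) t²`, so the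
embedding gives `∫ (F(u) - λ G(u)) ≥ -(μ₀/4) |u|₂² ≥ -¼ ‖u‖²`. Splitting `‖u‖²` into its `X⁺` and `X⁻`
parts yields `𝒥(u) ≤ ¾ ‖u⁺‖² - ¼ ‖u⁻‖²`, which tends to `-∞` along the sequence. -/

open Filter MeasureTheory

lemma neg_two_mul_sq_le_sub_mul {F G : ℝ → ℝ} {q ε CF CG lam : ℝ} (hε : 0 ≤ ε)
    (hF : ∀ t : ℝ, CF * |t| ^ q - ε * t ^ 2 ≤ F t)
    (hG : ∀ t : ℝ, G t ≤ ε * t ^ 2 + CG * |t| ^ q)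
    (hlam : 0 ≤ lam) (hlam1 : lam ≤ 1) (hlamCG : lam * CG ≤ CF) (t : ℝ) :
    -(2 * ε) * t ^ 2 ≤ F t - lam * G t := by
  have hGt : lam * G t ≤ lam * (ε * t ^ 2 + CG * |t| ^ q) :=
    mul_le_mul_of_nonneg_left (hG t) hlam
  have hpow : (0 : ℝ) ≤ |t| ^ q := by positivity
  nlinarith [hF t, mul_nonneg (sub_nonneg.mpr hlamCG) hpow,
    mul_nonneg (mul_nonneg hε (sub_nonneg.mpr hlam1)) (sq_nonneg t)]

lemma neg_mul_integral_sq_le_integral_comp {α : Type*} [MeasurableSpace α] {μ : Measure α}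
    (f : Lp ℝ 2 μ) {h : ℝ → ℝ} {c : ℝ} (hc : 0 ≤ c) (hh : ∀ t, -c * t ^ 2 ≤ h t) :
    -c * ∫ x, f x ^ 2 ∂μ ≤ ∫ x, h (f x) ∂μ := by
  by_cases hint : Integrable (fun x => h (f x)) μ
  · rw [← integral_const_mul]
    exact integral_mono ((Lp.memLp f).integrable_sq.const_mul _) hint fun x => hh _
  · -- a non-integrable integrand has integral `0`, which satisfies the bound too
    rw [integral_undef hint]
    have : 0 ≤ ∫ x, f x ^ 2 ∂μ := integral_nonneg fun x => sq_nonneg _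
    nlinarith

lemma tendsto_atBot_of_le_const_sub_sq {f b : ℕ → ℝ} {C c : ℝ} (hc : 0 < c)
    (hf : ∀ n, f n ≤ C - c * b n ^ 2) (hb : Tendsto b atTop atTop) :
    Tendsto f atTop atBot := by
  have hsq : Tendsto (fun n => c * b n ^ 2) atTop atTop := by
    simpa only [pow_two] using (hb.atTop_mul_atTop₀ hb).const_mul_atTop hc
  refine tendsto_atBot_mono (fun n => (hf n).trans_eq (sub_eq_add_neg _ _)) ?_
  exact tendsto_atBot_add_const_left atTop C (tendsto_neg_atTop_atBot.comp hsq)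

theorem stmt11_general {N : ℕ} {X : Type*} [NormedAddCommGroup X] [InnerProductSpace ℝ X]
    (Xp : Submodule ℝ X) [Xp.HasOrthogonalProjection]
    (ι : X →L[ℝ] (Lp ℝ 2 (volume : Measure (EuclideanSpace ℝ (Fin N)))))
    (F G : ℝ → ℝ) (q μ₀ CF CG lam : ℝ)
    (hCF : 0 < CF) (hCFG : CF ≤ CG) (hμ : 0 < μ₀)
    (hF : ∀ t : ℝ, CF * |t| ^ q - (μ₀ / 8) * t ^ 2 ≤ F t)
    (hG : ∀ t : ℝ, G t ≤ (μ₀ / 8) * t ^ 2 + CG * |t| ^ q)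
    (hemb : ∀ u : X, μ₀ * (∫ x, (ι u x) ^ 2) ≤ ‖u‖ ^ 2)
    (hlam : 0 < lam) (hlam2 : lam ≤ CF / CG)
    (J : X → ℝ)
    (hJ : ∀ u : X, J u = (1 / 2) * ‖(Xp.orthogonalProjectionOnto u : X)‖ ^ 2
      - (1 / 2) * ‖(Xpᗮ.orthogonalProjectionOnto u : X)‖ ^ 2
      - ∫ x, (F (ι u x) - lam * G (ι u x)))
    (u : ℕ → X)
    (hmInf : Tendsto (fun n => ‖(Xpᗮ.orthogonalProjectionOnto (u n) : X)‖) atTop atTop)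
    (hpBdd : ∃ C : ℝ, ∀ n, ‖(Xp.orthogonalProjectionOnto (u n) : X)‖ ≤ C) :
    (∀ n, J (u n) ≤ (3 / 4) * ‖(Xp.orthogonalProjectionOnto (u n) : X)‖ ^ 2
      - (1 / 4) * ‖(Xpᗮ.orthogonalProjectionOnto (u n) : X)‖ ^ 2) ∧
    Tendsto (fun n => J (u n)) atTop atBot := by
  have hCG : 0 < CG := hCF.trans_le hCFG
  have hlam1 : lam ≤ 1 := hlam2.trans (div_le_one_of_le₀ hCFG hCG.le)
  have hpt : ∀ t, -(2 * (μ₀ / 8)) * t ^ 2 ≤ F t - lam * G t :=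
    neg_two_mul_sq_le_sub_mul (by positivity) hF hG hlam.le hlam1 ((le_div_iff₀ hCG).mp hlam2)
  have hJ_le : ∀ v : X, J v ≤ (3 / 4) * ‖(Xp.orthogonalProjectionOnto v : X)‖ ^ 2
      - (1 / 4) * ‖(Xpᗮ.orthogonalProjectionOnto v : X)‖ ^ 2 := by
    intro v
    have hI := neg_mul_integral_sq_le_integral_comp (ι v) (by positivity) hpt
    have hpyth : ‖v‖ ^ 2 = ‖(Xp.orthogonalProjectionOnto v : X)‖ ^ 2
        + ‖(Xpᗮ.orthogonalProjectionOnto v : X)‖ ^ 2 :=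
      Submodule.norm_sq_eq_add_norm_sq_projection v Xp
    rw [hJ v]
    linarith [hemb v]
  refine ⟨fun n => hJ_le (u n), ?_⟩
  obtain ⟨C, hC⟩ := hpBdd
  have hJ_le_const : ∀ n, J (u n) ≤ (3 / 4) * C ^ 2
      - (1 / 4) * ‖(Xpᗮ.orthogonalProjectionOnto (u n) : X)‖ ^ 2 := fun n => by
    have hsq := pow_le_pow_left₀ (norm_nonneg _) (hC n) 2
    linarith [hJ_le (u n)]
  exact tendsto_atBot_of_le_const_sub_sq (by norm_num) hJ_le_const hmInf

theorem stmt11 {N : ℕ} {X : Type*} [NormedAddCommGroup X] [InnerProductSpace ℝ X]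
    [CompleteSpace X]
    (Xp : Submodule ℝ X) [Xp.HasOrthogonalProjection]
    (ι : X →L[ℝ] (Lp ℝ 2 (volume : Measure (EuclideanSpace ℝ (Fin N)))))
    (F G : ℝ → ℝ) (q μ₀ CF CG lam : ℝ)
    (hq : 2 < q) (hCF : 0 < CF) (hCFG : CF ≤ CG) (hμ : 0 < μ₀)
    (hF : ∀ t : ℝ, CF * |t| ^ q - (μ₀ / 8) * t ^ 2 ≤ F t)
    (hG : ∀ t : ℝ, G t ≤ (μ₀ / 8) * t ^ 2 + CG * |t| ^ q)
    (hemb : ∀ u : X, μ₀ * (∫ x, (ι u x) ^ 2) ≤ ‖u‖ ^ 2)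
    (hlam : 0 < lam) (hlam2 : lam ≤ CF / CG)
    (J : X → ℝ)
    (hJ : ∀ u : X, J u = (1 / 2) * ‖(Xp.orthogonalProjectionOnto u : X)‖ ^ 2
      - (1 / 2) * ‖(Xpᗮ.orthogonalProjectionOnto u : X)‖ ^ 2
      - ∫ x, (F (ι u x) - lam * G (ι u x)))
    (u : ℕ → X)
    (hmInf : Tendsto (fun n => ‖(Xpᗮ.orthogonalProjectionOnto (u n) : X)‖) atTop atTop)
    (hpBdd : ∃ C : ℝ, ∀ n, ‖(Xp.orthogonalProjectionOnto (u n) : X)‖ ≤ C) :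
    (∀ n, J (u n) ≤ (3 / 4) * ‖(Xp.orthogonalProjectionOnto (u n) : X)‖ ^ 2
      - (1 / 4) * ‖(Xpᗮ.orthogonalProjectionOnto (u n) : X)‖ ^ 2) ∧
    Tendsto (fun n => J (u n)) atTop atBot :=
  stmt11_general Xp ι F G q μ₀ CF CG lam hCF hCFG hμ hF hG hemb hlam hlam2 J hJ u hmInf hpBdd
end

section
/- Let X be a Hilbert space with unitary G-action, X = X⁺ ⊕ X⁻ with G-invariant summands, and 𝒥(u) = ½∥u⁺∥² − ½∥u⁻∥² − ℐ(u), where ℐ is C¹, G-invariant, ℐ' is sequentially weak-to-weak* continuous, and ℐ' satisfies: if (vₙ) is bounded and φₙ ⇀_G 0 then ℐ'(vₙ)(φₙ) → 0 (GWC). Suppose (uₙ) is a bounded sequence with ∥∇𝒥(uₙ)∥ → 0, infₙ |||uₙ||| ≥ δ/2 > 0, and that the pair (X, G) is a dislocation space. If uₙ ⇀_G 0, then ∥uₙ^±∥ → 0, contradicting infₙ |||uₙ||| ≥ δ/2 since |||uₙ||| ≤ ∥uₙ∥. Hence there exist gₙ ∈ G and v ≠ 0 with gₙ uₙ ⇀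 v along a subsequence, and v is a nontrivial critical point of 𝒥. -/
open Filter
open scoped RealInnerProductSpace

/-- `u_n ⇀_G 0`: for every `φ`, `sup_{g ∈ G} ⟨u_n, g φ⟩ → 0`. -/
def GWeakNull {X G : Type*} [NormedAddCommGroup X] [InnerProductSpace ℝ X] [Group G]
    (T : G →* (X ≃ₗᵢ[ℝ] X)) (u : ℕ → X) : Prop :=
  ∀ φ : X, ∀ ε > 0, ∃ N : ℕ, ∀ n ≥ N, ∀ g : G, |(⟪u n, T g φ⟫)| < ε

/-- A sequence of group elements converges weakly to `0` (as operators). -/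
def OpWeakNull {X G : Type*} [NormedAddCommGroup X] [InnerProductSpace ℝ X] [Group G]
    (T : G →* (X ≃ₗᵢ[ℝ] X)) (g : ℕ → G) : Prop :=
  ∀ w φ : X, Tendsto (fun n => ⟪T (g n) w, φ⟫) atTop (nhds 0)

open Topology

/-!
If `uₙ ⇀_G 0`, then also `uₙ^± ⇀_G 0`, because the projections onto `X⁺` and `X⁻` commute with
the unitary action; (GWC) then gives `ℐ'(uₙ)(uₙ^±) → 0`, and since also `𝒥'(uₙ)(uₙ^±) → 0`, the
identities `𝒥'(u)(u^±) = ±‖u^±‖² − ℐ'(u)(u^±)` force `‖uₙ‖ → 0`, against `|||uₙ||| ≥ δ/2`.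
So along a subsequence `|⟨uₙ, gₙφ⟩| ≥ ε` for some `φ`, `ε > 0`, `gₙ ∈ G`. The bounded sequence
`gₙ⁻¹uₙ` has a weakly convergent subsequence, whose limit `v` satisfies `|⟨v, φ⟩| ≥ ε`. As `𝒥` is
`G`-invariant, `∇𝒥(gₙ⁻¹uₙ) = gₙ⁻¹∇𝒥(uₙ) → 0`, and weak-to-weak* continuity of `ℐ'` passes this
to `𝒥'(v) = 0`.
-/

namespace Submodule
variable {X : Type*} [NormedAddCommGroup X] [InnerProductSpace ℝ X]
  (K : Submodule ℝ X) [K.HasOrthogonalProjection]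

theorem starProjection_linearIsometryEquiv_apply (e : X ≃ₗᵢ[ℝ] X) (he : ∀ x ∈ K, e x ∈ K)
    (he' : ∀ x ∈ K, e.symm x ∈ K) (x : X) : K.starProjection (e x) = e (K.starProjection x) := by
  refine K.eq_starProjection_of_mem_of_inner_eq_zero (he _ (K.starProjection_apply_mem x))
    fun y hy => ?_
  rw [← e.apply_symm_apply y, ← map_sub, e.inner_map_map]
  exact K.starProjection_inner_eq_zero x _ (he' y hy)

theorem starProjection_orthogonal_linearIsometryEquiv_apply (e : X ≃ₗᵢ[ℝ] X)
    (hK : ∀ x, K.starProjection (e x) = e (K.starProjection x)) (x : X) :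
    Kᗮ.starProjection (e x) = e (Kᗮ.starProjection x) := by
  simp only [K.starProjection_orthogonal, sub_apply, ContinuousLinearMap.id_apply, hK, map_sub]

theorem inner_starProjection_starProjection_right (x y : X) :
    ⟪K.starProjection x, K.starProjection y⟫ = ⟪K.starProjection x, y⟫ := by
  rw [← K.inner_starProjection_left_eq_right,
    K.starProjection_eq_self_iff.2 (K.starProjection_apply_mem x)]

end Submodule

section
variable {X : Type*} [NormedAddCommGroup X] [InnerProductSpace ℝ X]

theorem tendsto_inner_zero_of_tendsto_norm_zero {a b : ℕ → X} {C : ℝ}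
    (ha : Tendsto (fun n => ‖a n‖) atTop (𝓝 0)) (hb : ∀ n, ‖b n‖ ≤ C) :
    Tendsto (fun n => ⟪a n, b n⟫) atTop (𝓝 0) := by
  refine squeeze_zero_norm (fun n => (norm_inner_le_norm (a n) (b n)).trans ?_)
    (by simpa using ha.mul_const C)
  exact mul_le_mul_of_nonneg_left (hb n) (norm_nonneg _)

theorem LinearIsometryEquiv.gradient_apply_of_invariant [CompleteSpace X] {f : X → ℝ}
    (e : X ≃ₗᵢ[ℝ] X) (hf : ∀ x, f (e x) = f x) (x : X) : gradient f (e x) = e (gradient f x) := by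
  have hcomp := e.toContinuousLinearEquiv.comp_right_fderiv (f := f) (x := x)
  rw [show f ∘ e.toContinuousLinearEquiv = f from funext hf] at hcomp
  refine ext_inner_right ℝ fun φ => ?_
  calc ⟪gradient f (e x), φ⟫ = fderiv ℝ f (e x) φ := inner_gradient_left
    _ = fderiv ℝ f x (e.symm φ) := by rw [hcomp]; simp
    _ = ⟪gradient f x, e.symm φ⟫ := inner_gradient_left.symm
    _ = ⟪e (gradient f x), φ⟫ := by rw [← e.inner_map_map, e.apply_symm_apply]

theorem exists_subseq_tendsto_inner_of_bounded [CompleteSpace X] {w : ℕ → X} {C : ℝ}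
    (hw : ∀ n, ‖w n‖ ≤ C) :
    ∃ ψ : ℕ → ℕ, StrictMono ψ ∧ ∃ v : X,
      ∀ φ : X, Tendsto (fun k => ⟪w (ψ k), φ⟫) atTop (𝓝 ⟪v, φ⟫) := by
  -- Sequential Banach–Alaoglu in the separable closed span `S` of the sequence, then Riesz in `S`;
  -- `⟪w k, φ⟫` only depends on the projection of `φ` onto `S`.
  set S : Submodule ℝ X := (Submodule.span ℝ (Set.range w)).topologicalClosure
  have hwS : ∀ n, w n ∈ S :=
    fun n => Submodule.le_topologicalClosure _ (Submodule.subset_span ⟨n, rfl⟩)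
  have : CompleteSpace S := (Submodule.isClosed_topologicalClosure _).completeSpace_coe
  have : TopologicalSpace.SeparableSpace S :=
    (Set.countable_range w).isSeparable.span.closure.separableSpace
  let f : ℕ → WeakDual ℝ S := fun n =>
    StrongDual.toWeakDual (InnerProductSpace.toDual ℝ S ⟨w n, hwS n⟩)
  have hf : ∀ n, f n ∈ WeakDual.toStrongDual ⁻¹' Metric.closedBall 0 C := fun n => by
    rw [Set.mem_preimage, StrongDual.toStrongDual_toWeakDual, Metric.mem_closedBall]
    exact (dist_zero_right _).trans_le <|
      ((InnerProductSpace.toDual ℝ S).norm_map ⟨w n, hwS n⟩).trans_le (hw n)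
  obtain ⟨ℓ, -, ψ, hψ, hlim⟩ := WeakDual.isSeqCompact_closedBall ℝ S 0 C hf
  set v : S := (InnerProductSpace.toDual ℝ S).symm ℓ
  refine ⟨ψ, hψ, v, fun φ => ?_⟩
  have hproj : ∀ y ∈ S, ⟪y, φ⟫ = ⟪y, S.starProjection φ⟫ := fun y hy => by
    rw [← Submodule.inner_starProjection_left_eq_right, Submodule.starProjection_eq_self_iff.2 hy]
  have := ((WeakDual.eval_continuous (S.orthogonalProjectionOnto φ)).tendsto ℓ).comp
    (hlim : Tendsto (f ∘ ψ) atTop (𝓝 ℓ))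
  have hv : ⟪(v : X), S.starProjection φ⟫ = ℓ (S.orthogonalProjectionOnto φ) :=
    InnerProductSpace.toDual_symm_apply (y := WeakDual.toStrongDual ℓ)
  rw [hproj _ v.2, hv]
  convert this using 2 with k
  simp [f, hproj _ (hwS _), InnerProductSpace.toDual_apply_apply]

variable (K : Submodule ℝ X) [K.HasOrthogonalProjection] (I : X → ℝ)

noncomputable def indefiniteFunctional (u : X) : ℝ :=
  1 / 2 * ‖K.starProjection u‖ ^ 2 - 1 / 2 * ‖Kᗮ.starProjection u‖ ^ 2 - I u

variable {K I}

theorem fderiv_indefiniteFunctional_apply (hI : Differentiable ℝ I) (w φ : X) :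
    fderiv ℝ (indefiniteFunctional K I) w φ =
      ⟪K.starProjection w, φ⟫ - ⟪Kᗮ.starProjection w, φ⟫ - fderiv ℝ I w φ := by
  have hP := (K.starProjection.hasFDerivAt (x := w)).norm_sq
  have hQ := (Kᗮ.starProjection.hasFDerivAt (x := w)).norm_sq
  have hJ : HasFDerivAt (indefiniteFunctional K I) _ w :=
    ((hP.const_mul (1 / 2)).sub (hQ.const_mul (1 / 2))).sub (hI w).hasFDerivAt
  rw [hJ.fderiv]
  simp only [sub_apply, smul_apply, ContinuousLinearMap.comp_apply, innerSL_apply_apply,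
    Submodule.inner_starProjection_starProjection_right, smul_eq_mul, nsmul_eq_mul]
  ring

theorem fderiv_indefiniteFunctional_starProjection (hI : Differentiable ℝ I) (u : X) :
    fderiv ℝ (indefiniteFunctional K I) u (K.starProjection u) =
      ‖K.starProjection u‖ ^ 2 - fderiv ℝ I u (K.starProjection u) := by
  rw [fderiv_indefiniteFunctional_apply hI, real_inner_self_eq_norm_sq,
    K.inner_left_of_mem_orthogonal (K.starProjection_apply_mem u)
      (Kᗮ.starProjection_apply_mem u), sub_zero]

theorem fderiv_indefiniteFunctional_starProjection_orthogonal (hI : Differentiable ℝ I) (u : X) :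
    fderiv ℝ (indefiniteFunctional K I) u (Kᗮ.starProjection u) =
      -‖Kᗮ.starProjection u‖ ^ 2 - fderiv ℝ I u (Kᗮ.starProjection u) := by
  rw [fderiv_indefiniteFunctional_apply hI, real_inner_self_eq_norm_sq,
    K.inner_right_of_mem_orthogonal (K.starProjection_apply_mem u)
      (Kᗮ.starProjection_apply_mem u), zero_sub]

theorem indefiniteFunctional_linearIsometryEquiv_apply (e : X ≃ₗᵢ[ℝ] X)
    (hK : ∀ x, K.starProjection (e x) = e (K.starProjection x)) (hI : ∀ x, I (e x) = I x)
    (x : X) : indefiniteFunctional K I (e x) = indefiniteFunctional K I x := by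
  simp only [indefiniteFunctional, hK, K.starProjection_orthogonal_linearIsometryEquiv_apply e hK,
    hI, LinearIsometryEquiv.norm_map]

end

section
variable {X G : Type*} [NormedAddCommGroup X] [InnerProductSpace ℝ X] [Group G]
  {T : G →* (X ≃ₗᵢ[ℝ] X)}

theorem GWeakNull.starProjection {u : ℕ → X} (hu : GWeakNull T u) {K : Submodule ℝ X}
    [K.HasOrthogonalProjection] (hK : ∀ g x, K.starProjection (T g x) = T g (K.starProjection x)) :
    GWeakNull T fun n => K.starProjection (u n) := by
  intro φ ε hε
  obtain ⟨N, hN⟩ := hu (K.starProjection φ) ε hε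
  refine ⟨N, fun n hn g => ?_⟩
  rw [K.inner_starProjection_left_eq_right, hK]
  exact hN n hn g

theorem exists_subseq_of_not_gWeakNull {u : ℕ → X} (hu : ¬ GWeakNull T u) :
    ∃ φ : X, ∃ ε > 0, ∃ m : ℕ → ℕ, StrictMono m ∧ ∃ g : ℕ → G,
      ∀ k, ε ≤ |⟪u (m k), T (g k) φ⟫| := by
  simp only [GWeakNull, not_forall, not_exists, not_lt] at hu
  obtain ⟨φ, ε, hε, hfreq⟩ := hu
  have : ∃ᶠ n in atTop, ∃ g : G, ε ≤ |⟪u n, T g φ⟫| :=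
    frequently_atTop.2 fun N => by simpa using hfreq N
  obtain ⟨m, hm, hg⟩ := extraction_of_frequently_atTop this
  choose g hg using hg
  exact ⟨φ, ε, hε, m, hm, g, hg⟩

variable [CompleteSpace X] {K : Submodule ℝ X} [K.HasOrthogonalProjection] {I : X → ℝ}

theorem exists_subseq_translate_tendsto_inner_of_not_gWeakNull {u : ℕ → X} {C : ℝ}
    (hbdd : ∀ n, ‖u n‖ ≤ C) (hu : ¬ GWeakNull T u) :
    ∃ m : ℕ → ℕ, StrictMono m ∧ ∃ g : ℕ → G, ∃ v : X, v ≠ 0 ∧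
      ∀ φ, Tendsto (fun k => ⟪T (g k) (u (m k)), φ⟫) atTop (𝓝 ⟪v, φ⟫) := by
  obtain ⟨φ, ε, hε, m, hm, g, hg⟩ := exists_subseq_of_not_gWeakNull hu
  set w : ℕ → X := fun k => T (g k)⁻¹ (u (m k))
  have hw : ∀ k, ⟪w k, φ⟫ = ⟪u (m k), T (g k) φ⟫ := fun k => by
    simp only [w, map_inv, LinearIsometryEquiv.coe_inv, LinearIsometryEquiv.inner_map_eq_flip,
      LinearIsometryEquiv.symm_symm]
  obtain ⟨ψ, hψ, v, hv⟩ := exists_subseq_tendsto_inner_of_bounded (w := w) (C := C)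
    fun k => by simpa [w] using hbdd (m k)
  refine ⟨m ∘ ψ, hm.comp hψ, fun k => (g (ψ k))⁻¹, v, ?_, hv⟩
  rintro rfl
  have := ge_of_tendsto' (hv φ).abs fun k => (hw (ψ k)).symm ▸ hg (ψ k)
  simp only [inner_zero_left, abs_zero] at this
  linarith

theorem tendsto_norm_sq_zero_of_gWeakNull (hI : Differentiable ℝ I) {u : ℕ → X} {C : ℝ}
    (hGWC : ∀ φs : ℕ → X, GWeakNull T φs → Tendsto (fun n => fderiv ℝ I (u n) (φs n)) atTop (𝓝 0))
    (hK : ∀ g x, K.starProjection (T g x) = T g (K.starProjection x)) (hbdd : ∀ n, ‖u n‖ ≤ C)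
    (hPS : Tendsto (fun n => ‖gradient (indefiniteFunctional K I) (u n)‖) atTop (𝓝 0))
    (hu : GWeakNull T u) : Tendsto (fun n => ‖u n‖ ^ 2) atTop (𝓝 0) := by
  have hJ : ∀ (L : Submodule ℝ X) [L.HasOrthogonalProjection],
      Tendsto (fun n => fderiv ℝ (indefiniteFunctional K I) (u n) (L.starProjection (u n)))
        atTop (𝓝 0) := fun L _ => by
    simpa only [inner_gradient_left] using tendsto_inner_zero_of_tendsto_norm_zero hPS
      fun n => (L.norm_starProjection_apply_le (u n)).trans (hbdd n)
  have hP : Tendsto (fun n => ‖K.starProjection (u n)‖ ^ 2) atTop (𝓝 0) := by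
    simpa only [fderiv_indefiniteFunctional_starProjection hI, sub_add_cancel, add_zero] using
      (hJ K).add (hGWC _ (hu.starProjection hK))
  have hQ : Tendsto (fun n => ‖Kᗮ.starProjection (u n)‖ ^ 2) atTop (𝓝 0) := by
    have hQK : ∀ g x, Kᗮ.starProjection (T g x) = T g (Kᗮ.starProjection x) := fun g =>
      K.starProjection_orthogonal_linearIsometryEquiv_apply _ (hK g)
    simpa only [fderiv_indefiniteFunctional_starProjection_orthogonal hI, sub_add_cancel, add_zero,
      neg_neg, neg_zero] using ((hJ Kᗮ).add (hGWC _ (hu.starProjection hQK))).neg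
  simpa only [← K.norm_sq_eq_add_norm_sq_starProjection, add_zero] using hP.add hQ

theorem fderiv_indefiniteFunctional_eq_zero_of_tendsto (hI : Differentiable ℝ I)
    {w : ℕ → X} {v : X} (hwv : ∀ φ, Tendsto (fun k => ⟪w k, φ⟫) atTop (𝓝 ⟪v, φ⟫))
    (hIw : ∀ φ, Tendsto (fun k => fderiv ℝ I (w k) φ) atTop (𝓝 (fderiv ℝ I v φ)))
    (hPS : Tendsto (fun k => ‖gradient (indefiniteFunctional K I) (w k)‖) atTop (𝓝 0)) :
    fderiv ℝ (indefiniteFunctional K I) v = 0 := by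
  ext φ
  have hlim : Tendsto (fun k => fderiv ℝ (indefiniteFunctional K I) (w k) φ) atTop
      (𝓝 (fderiv ℝ (indefiniteFunctional K I) v φ)) := by
    simp only [fderiv_indefiniteFunctional_apply hI, K.inner_starProjection_left_eq_right,
      Kᗮ.inner_starProjection_left_eq_right]
    exact ((hwv _).sub (hwv _)).sub (hIw φ)
  have hzero : Tendsto (fun k => fderiv ℝ (indefiniteFunctional K I) (w k) φ) atTop (𝓝 0) := by
    simpa only [inner_gradient_left] using
      tendsto_inner_zero_of_tendsto_norm_zero hPS fun _ => le_refl ‖φ‖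
  exact tendsto_nhds_unique hlim hzero

end

theorem stmt17_general {X G : Type*} [NormedAddCommGroup X] [InnerProductSpace ℝ X] [CompleteSpace X]
    [Group G] (T : G →* (X ≃ₗᵢ[ℝ] X))
    (Xp : Submodule ℝ X) [Submodule.HasOrthogonalProjection Xp]
    (hXpInv : ∀ (g : G) (u : X), u ∈ Xp → T g u ∈ Xp)
    (I : X → ℝ) (hI : ContDiff ℝ 1 I)
    (hIinv : ∀ (g : G) (u : X), I (T g u) = I u)
    -- sequential weak-to-weak* continuity of I'
    (hIww : ∀ (v : ℕ → X) (v₀ : X),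
      (∀ φ : X, Tendsto (fun n => ⟪v n, φ⟫) atTop (nhds ⟪v₀, φ⟫)) →
      ∀ φ : X, Tendsto (fun n => fderiv ℝ I (v n) φ) atTop (nhds (fderiv ℝ I v₀ φ)))
    -- (GWC)
    (hGWC : ∀ (v φs : ℕ → X) (C : ℝ), (∀ n, ‖v n‖ ≤ C) → GWeakNull T φs →
      Tendsto (fun n => fderiv ℝ I (v n) (φs n)) atTop (nhds 0))
    (J : X → ℝ)
    (hJ : ∀ u : X, J u = (1 / 2) * ‖(Submodule.orthogonalProjectionOnto Xp u : X)‖ ^ 2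
      - (1 / 2) * ‖(Submodule.orthogonalProjectionOnto Xpᗮ u : X)‖ ^ 2 - I u)
    (u : ℕ → X) (C : ℝ) (hbdd : ∀ n, ‖u n‖ ≤ C)
    (hPS : Tendsto (fun n => ‖gradient J (u n)‖) atTop (nhds 0))
    (TN : X → ℝ) (hTN : ∀ v : X, TN v ≤ ‖v‖)
    (δ : ℝ) (hδ : 0 < δ) (hTNu : ∀ n, δ / 2 ≤ TN (u n)) :
    ∃ ψ : ℕ → ℕ, StrictMono ψ ∧ ∃ g : ℕ → G, ∃ v : X, v ≠ 0 ∧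
      (∀ φ : X, Tendsto (fun n => ⟪T (g n) (u (ψ n)), φ⟫) atTop (nhds ⟪v, φ⟫)) ∧
      fderiv ℝ J v = 0 := by
  have hK : ∀ g x, Xp.starProjection (T g x) = T g (Xp.starProjection x) := fun g =>
    Xp.starProjection_linearIsometryEquiv_apply (T g) (hXpInv g) fun x hx => by
      simpa only [map_inv, LinearIsometryEquiv.coe_inv] using hXpInv g⁻¹ x hx
  obtain rfl : J = indefiniteFunctional Xp I := funext hJ
  have hIdiff : Differentiable ℝ I := hI.differentiable one_ne_zero
  have hnull : ¬ GWeakNull T u := fun hu => by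
    have h := tendsto_norm_sq_zero_of_gWeakNull hIdiff (fun φs => hGWC u φs C hbdd) hK hbdd hPS hu
    obtain ⟨n, hn⟩ := (h.eventually (gt_mem_nhds (by positivity : 0 < (δ / 2) ^ 2))).exists
    have := (hTNu n).trans (hTN (u n))
    nlinarith
  obtain ⟨m, hm, g, v, hv0, hv⟩ :=
    exists_subseq_translate_tendsto_inner_of_not_gWeakNull hbdd hnull
  refine ⟨m, hm, g, v, hv0, hv, ?_⟩
  have hgrad : ∀ k, ‖gradient (indefiniteFunctional Xp I) (T (g k) (u (m k)))‖ =
      ‖gradient (indefiniteFunctional Xp I) (u (m k))‖ := fun k => by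
    rw [LinearIsometryEquiv.gradient_apply_of_invariant _
      (indefiniteFunctional_linearIsometryEquiv_apply _ (hK _) (hIinv _)),
      LinearIsometryEquiv.norm_map]
  refine fderiv_indefiniteFunctional_eq_zero_of_tendsto hIdiff hv (hIww _ v hv) ?_
  simpa only [Function.comp_def, hgrad] using hPS.comp hm.tendsto_atTop

theorem stmt17 {X G : Type*} [NormedAddCommGroup X] [InnerProductSpace ℝ X] [CompleteSpace X]
    [Group G] (T : G →* (X ≃ₗᵢ[ℝ] X))
    (Xp : Submodule ℝ X) [Submodule.HasOrthogonalProjection Xp]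
    (hXpInv : ∀ (g : G) (u : X), u ∈ Xp → T g u ∈ Xp)
    (hXmInv : ∀ (g : G) (u : X), u ∈ Xpᗮ → T g u ∈ Xpᗮ)
    -- dislocation space property
    (hdisloc : ∀ (v : ℕ → X) (g : ℕ → G), ¬ OpWeakNull T g →
      (∀ φ : X, Tendsto (fun n => ⟪v n, φ⟫) atTop (nhds 0)) →
      ∃ ψ : ℕ → ℕ, StrictMono ψ ∧
        ∀ φ : X, Tendsto (fun n => ⟪T (g (ψ n)) (v (ψ n)), φ⟫) atTop (nhds 0))
    (I : X → ℝ) (hI : ContDiff ℝ 1 I) (hI0 : I 0 = 0)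
    (hIinv : ∀ (g : G) (u : X), I (T g u) = I u)
    -- sequential weak-to-weak* continuity of I'
    (hIww : ∀ (v : ℕ → X) (v₀ : X),
      (∀ φ : X, Tendsto (fun n => ⟪v n, φ⟫) atTop (nhds ⟪v₀, φ⟫)) →
      ∀ φ : X, Tendsto (fun n => fderiv ℝ I (v n) φ) atTop (nhds (fderiv ℝ I v₀ φ)))
    -- (GWC)
    (hGWC : ∀ (v φs : ℕ → X) (C : ℝ), (∀ n, ‖v n‖ ≤ C) → GWeakNull T φs →
      Tendsto (fun n => fderiv ℝ I (v n) (φs n)) atTop (nhds 0))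
    (J : X → ℝ)
    (hJ : ∀ u : X, J u = (1 / 2) * ‖(Submodule.orthogonalProjectionOnto Xp u : X)‖ ^ 2
      - (1 / 2) * ‖(Submodule.orthogonalProjectionOnto Xpᗮ u : X)‖ ^ 2 - I u)
    (u : ℕ → X) (C : ℝ) (hbdd : ∀ n, ‖u n‖ ≤ C)
    (hPS : Tendsto (fun n => ‖gradient J (u n)‖) atTop (nhds 0))
    (TN : X → ℝ) (hTN : ∀ v : X, TN v ≤ ‖v‖)
    (δ : ℝ) (hδ : 0 < δ) (hTNu : ∀ n, δ / 2 ≤ TN (u n)) :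
    ∃ ψ : ℕ → ℕ, StrictMono ψ ∧ ∃ g : ℕ → G, ∃ v : X, v ≠ 0 ∧
      (∀ φ : X, Tendsto (fun n => ⟪T (g n) (u (ψ n)), φ⟫) atTop (nhds ⟪v, φ⟫)) ∧
      fderiv ℝ J v = 0 :=
  stmt17_general T Xp hXpInv I hI hIinv hIww hGWC J hJ u C hbdd hPS TN hTN δ hδ hTNu
end
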